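/- arXiv:1706.09299 — 2 statements merged into one kernel-verified Lean document; each statement's English description precedes it below -/
import Mathlib

section
/- Let X be a (complete) real Hilbert space, let F : X → X be L-Lipschitz (L > 0) and strongly monotone with constant c > 0, set B(x) = x − (c/L²)·F(x) and α = √(1 − c²/L²), and assume α ∈ (0,1). Let η_h ≥ 0 and let (u^n) and (u_h^n) be sequences in X with u_h^0 = u^0, u^{n+1} = B(u^n) for all n, and |⟪B(u_h^n) − u_h^{n+1}, v⟫| ≤ η_h‖v‖ for all v ∈ X and all n. Then the residual satisfies ‖F(u_h^n)‖ ≤ (L/(1 − α))·(αⁿ·‖u¹ − u⁰‖ + η_h) for all n ∈ ℕ. -/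
open scoped RealInnerProductSpace

/-!
Strong monotonicity and the Lipschitz bound make the damped map `B = id - (c/L²) F` a contraction
with constant `α = √(1 - c²/L²)`, whose fixed point `w` is a zero of `F`. The fineness assumption
says that the discrete iterates are an `η_h`-perturbed fixed-point iteration of `B`, so
`‖u_h^n - w‖ ≤ αⁿ ‖u⁰ - w‖ + η_h/(1 - α)`, and `‖u⁰ - w‖ ≤ ‖u¹ - u⁰‖/(1 - α)` by the a posteriori
estimate for contractions. Finally `‖F(u_h^n)‖ = ‖F(u_h^n) - F(w)‖ ≤ L ‖u_h^n - w‖`.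
-/

theorem le_pow_mul_add_div_of_le_mul_add {d : ℕ → ℝ} {α η : ℝ} (hα : 0 ≤ α) (hα1 : α < 1)
    (hη : 0 ≤ η) (hd : ∀ n, d (n + 1) ≤ α * d n + η) (n : ℕ) :
    d n ≤ α ^ n * d 0 + η / (1 - α) := by
  induction n with
  | zero => simpa using div_nonneg hη (sub_nonneg.mpr hα1.le)
  | succ n ih =>
    have h1α : 1 - α ≠ 0 := (sub_pos.mpr hα1).ne'
    calc d (n + 1) ≤ α * d n + η := hd n
      _ ≤ α * (α ^ n * d 0 + η / (1 - α)) + η := by gcongr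
      _ = α ^ (n + 1) * d 0 + η / (1 - α) := by field_simp; ring

theorem ContractingWith.dist_isFixedPt_le_of_dist_succ_le {M : Type*} [MetricSpace M] {K : NNReal}
    {f : M → M} (hf : ContractingWith K f) {w : M} (hw : Function.IsFixedPt f w) {u : ℕ → M}
    {η : ℝ} (hu : ∀ n, dist (u (n + 1)) (f (u n)) ≤ η) (n : ℕ) :
    dist (u n) w ≤ K ^ n * dist (u 0) w + η / (1 - K) := by
  refine le_pow_mul_add_div_of_le_mul_add (d := fun n ↦ dist (u n) w) K.2 hf.1
    (dist_nonneg.trans (hu 0)) (fun n ↦ ?_) n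
  calc dist (u (n + 1)) w ≤ dist (u (n + 1)) (f (u n)) + dist (f (u n)) (f w) := by
        rw [hw.eq]; exact dist_triangle _ _ _
    _ ≤ η + K * dist (u n) w := add_le_add (hu n) (hf.dist_le_mul _ _)
    _ = K * dist (u n) w + η := add_comm _ _

section InnerProductSpace

variable {X : Type*} [NormedAddCommGroup X] [InnerProductSpace ℝ X]

theorem norm_le_of_abs_inner_le {x : X} {η : ℝ} (hη : 0 ≤ η) (h : ∀ v, |⟪x, v⟫| ≤ η * ‖v‖) :
    ‖x‖ ≤ η := by
  rw [← innerSL_apply_norm ℝ x]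
  exact ContinuousLinearMap.opNorm_le_bound _ hη fun v ↦ by simpa using h v

/-- The damping factor `c/L²` is the minimiser of `1 - 2kc + k²L²`, the bound these hypotheses
give on `‖d - k • f‖² / ‖d‖²`. -/
theorem norm_sub_smul_le_sqrt_mul_norm {d f : X} {L c : ℝ} (hc : 0 ≤ c) (hf : ‖f‖ ≤ L * ‖d‖)
    (hmono : c * ‖d‖ ^ 2 ≤ ⟪f, d⟫) :
    ‖d - (c / L ^ 2) • f‖ ≤ √(1 - c ^ 2 / L ^ 2) * ‖d‖ := by
  set k := c / L ^ 2
  have hk : 0 ≤ k := by positivity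
  have hf2 : ‖f‖ ^ 2 ≤ (L * ‖d‖) ^ 2 := pow_le_pow_left₀ (norm_nonneg f) hf 2
  have hsq : ‖d - k • f‖ ^ 2 ≤ (1 - c ^ 2 / L ^ 2) * ‖d‖ ^ 2 := by
    rw [norm_sub_sq_real, real_inner_smul_right, norm_smul, Real.norm_eq_abs, abs_of_nonneg hk,
      real_inner_comm]
    have hkL : k * (L ^ 2 * k) = c ^ 2 / L ^ 2 := by
      rcases eq_or_ne L 0 with rfl | hL
      · simp [k]
      · simp only [k]; field_simp
    have hkc : k * c = c ^ 2 / L ^ 2 := by ring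
    nlinarith [mul_le_mul_of_nonneg_left hmono hk, mul_le_mul_of_nonneg_left hf2 (sq_nonneg k)]
  calc ‖d - k • f‖ = √(‖d - k • f‖ ^ 2) := (Real.sqrt_sq (norm_nonneg _)).symm
    _ ≤ √((1 - c ^ 2 / L ^ 2) * ‖d‖ ^ 2) := Real.sqrt_le_sqrt hsq
    _ = √(1 - c ^ 2 / L ^ 2) * ‖d‖ := by
        rw [Real.sqrt_mul' _ (sq_nonneg _), Real.sqrt_sq (norm_nonneg _)]

theorem contractingWith_sub_smul {F : X → X} {L c : ℝ} (hc : 0 ≤ c)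
    (hLip : ∀ x y : X, ‖F x - F y‖ ≤ L * ‖x - y‖)
    (hmono : ∀ x y : X, c * ‖x - y‖ ^ 2 ≤ ⟪F x - F y, x - y⟫) (hα1 : √(1 - c ^ 2 / L ^ 2) < 1) :
    ContractingWith ⟨√(1 - c ^ 2 / L ^ 2), Real.sqrt_nonneg _⟩ fun x ↦ x - (c / L ^ 2) • F x := by
  refine ⟨by exact_mod_cast hα1, LipschitzWith.of_dist_le_mul fun x y ↦ ?_⟩
  rw [dist_eq_norm, dist_eq_norm, sub_sub_sub_comm, ← smul_sub]
  exact norm_sub_smul_le_sqrt_mul_norm hc (hLip x y) (hmono x y)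

end InnerProductSpace

theorem stmt5_general
    {X : Type*} [NormedAddCommGroup X] [InnerProductSpace ℝ X] [CompleteSpace X]
    (F : X → X) (L c : ℝ) (hL : 0 < L) (hc : 0 < c)
    (hLip : ∀ x y : X, ‖F x - F y‖ ≤ L * ‖x - y‖)
    (hmono : ∀ x y : X, c * ‖x - y‖ ^ 2 ≤ ⟪F x - F y, x - y⟫)
    (B : X → X) (hBdef : ∀ x : X, B x = x - (c / L ^ 2) • F x)
    (α : ℝ) (hαdef : α = Real.sqrt (1 - c ^ 2 / L ^ 2)) (hα1 : α < 1)
    (ηh : ℝ) (hη : 0 ≤ ηh)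
    (useq uh : ℕ → X) (h0 : uh 0 = useq 0)
    (hiter : ∀ n, useq (n + 1) = B (useq n))
    (hfine : ∀ n, ∀ v : X, |⟪B (uh n) - uh (n + 1), v⟫| ≤ ηh * ‖v‖) :
    ∀ n : ℕ,
      ‖F (uh n)‖ ≤ (L / (1 - α)) * (α ^ n * ‖useq 1 - useq 0‖ + ηh) := by
  intro n
  have hα : 0 ≤ α := hαdef ▸ Real.sqrt_nonneg _
  have hB : ContractingWith ⟨α, hα⟩ B := by
    subst hαdef
    rw [show B = fun x ↦ x - (c / L ^ 2) • F x from funext hBdef]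
    exact contractingWith_sub_smul hc.le hLip hmono hα1
  have : Nonempty X := ⟨0⟩
  set w := ContractingWith.fixedPoint B hB
  have hFw : F w = 0 := by
    have hw : B w = w := hB.fixedPoint_isFixedPt
    simpa [hBdef, hc.ne', hL.ne'] using hw
  have hstep : ∀ n, dist (uh (n + 1)) (B (uh n)) ≤ ηh := fun n ↦ by
    rw [dist_comm, dist_eq_norm]; exact norm_le_of_abs_inner_le hη (hfine n)
  have hstart : dist (uh 0) w ≤ ‖useq 1 - useq 0‖ / (1 - α) := by
    rw [h0, ← dist_eq_norm, dist_comm (useq 1), hiter 0]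
    exact hB.dist_fixedPoint_le (useq 0)
  have hdist : dist (uh n) w ≤ α ^ n * dist (uh 0) w + ηh / (1 - α) :=
    hB.dist_isFixedPt_le_of_dist_succ_le hB.fixedPoint_isFixedPt hstep n
  have h1α : 0 < 1 - α := sub_pos.mpr hα1
  calc ‖F (uh n)‖ = ‖F (uh n) - F w‖ := by rw [hFw, sub_zero]
    _ ≤ L * dist (uh n) w := dist_eq_norm (uh n) w ▸ hLip _ _
    _ ≤ L * (α ^ n * (‖useq 1 - useq 0‖ / (1 - α)) + ηh / (1 - α)) := by
        gcongr; exact hdist.trans (by gcongr)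
    _ = _ := by field_simp

/-- Residual bound: under the assumptions of the a priori estimate, the residual satisfies
`‖F(u_h^n)‖ ≤ (L/(1 - α)) (αⁿ ‖u¹ - u⁰‖ + η_h)` for all `n`. -/
theorem stmt5
    {X : Type*} [NormedAddCommGroup X] [InnerProductSpace ℝ X] [CompleteSpace X]
    (F : X → X) (L c : ℝ) (hL : 0 < L) (hc : 0 < c)
    (hLip : ∀ x y : X, ‖F x - F y‖ ≤ L * ‖x - y‖)
    (hmono : ∀ x y : X, c * ‖x - y‖ ^ 2 ≤ ⟪F x - F y, x - y⟫)
    (B : X → X) (hBdef : ∀ x : X, B x = x - (c / L ^ 2) • F x)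
    (α : ℝ) (hαdef : α = Real.sqrt (1 - c ^ 2 / L ^ 2)) (hα0 : 0 < α) (hα1 : α < 1)
    (ηh : ℝ) (hη : 0 ≤ ηh)
    (useq uh : ℕ → X) (h0 : uh 0 = useq 0)
    (hiter : ∀ n, useq (n + 1) = B (useq n))
    (hfine : ∀ n, ∀ v : X, |⟪B (uh n) - uh (n + 1), v⟫| ≤ ηh * ‖v‖) :
    ∀ n : ℕ,
      ‖F (uh n)‖ ≤ (L / (1 - α)) * (α ^ n * ‖useq 1 - useq 0‖ + ηh) :=
  stmt5_general F L c hL hc hLip hmono B hBdef α hαdef hα1 ηh hη useq uh h0 hiter hfine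
end

section
/- (A posteriori error bound) Let X be a (complete) real Hilbert space, let F : X → X be L-Lipschitz (L > 0) and strongly monotone with constant c > 0, set B(x) = x − (c/L²)·F(x), and let u ∈ X be the unique zero of F. Let η_h ≥ 0 and let (u_h^n)_{n≥0} be a sequence in X such that for every n and every v ∈ X one has |⟪B(u_h^n) − u_h^{n+1}, v⟫| ≤ η_h·‖v‖. Then for every n ≥ 0 the error e_h^{n+1} := u − u_h^{n+1} satisfies ‖e_h^{n+1}‖ ≤ (L²/c²)·η_h + (L/c)·(1 + L/c)·‖u_h^{n+1} − u_h^n‖. -/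
/-!
Strong monotonicity and Cauchy–Schwarz give `c ‖u - w‖ ≤ ‖F w‖` for `w = u_h^{n+1}`, and
`(c/L²) F w = w - B w`. Splitting `w - B w` through `B (u_h^n)`, the fineness assumption bounds
`‖w - B (u_h^n)‖` by `η_h`, while `B` is `(1 + c/L)`-Lipschitz.
-/

open scoped RealInnerProductSpace

section

variable {X : Type*} [NormedAddCommGroup X] [InnerProductSpace ℝ X]

theorem mul_norm_sub_le_norm_sub_of_strongly_monotone {F : X → X} {c : ℝ}
    (hmono : ∀ x y : X, c * ‖x - y‖ ^ 2 ≤ ⟪F x - F y, x - y⟫) (x y : X) :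
    c * ‖x - y‖ ≤ ‖F x - F y‖ := by
  rcases eq_or_ne x y with rfl | hxy
  · simp
  have hpos : 0 < ‖x - y‖ := norm_pos_iff.mpr (sub_ne_zero.mpr hxy)
  refine le_of_mul_le_mul_right ?_ hpos
  calc c * ‖x - y‖ * ‖x - y‖ = c * ‖x - y‖ ^ 2 := by ring
    _ ≤ ⟪F x - F y, x - y⟫ := hmono x y
    _ ≤ ‖F x - F y‖ * ‖x - y‖ := real_inner_le_norm _ _

theorem norm_le_of_forall_abs_inner_le {w : X} {η : ℝ} (hη : 0 ≤ η)
    (h : ∀ v : X, |⟪w, v⟫| ≤ η * ‖v‖) : ‖w‖ ≤ η := by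
  rw [← innerSL_apply_norm ℝ w]
  exact ContinuousLinearMap.opNorm_le_bound _ hη fun v => by simpa using h v

theorem norm_sub_smul_sub_le {F : X → X} {L a : ℝ} (ha : 0 ≤ a)
    (hLip : ∀ x y : X, ‖F x - F y‖ ≤ L * ‖x - y‖) (x y : X) :
    ‖(x - a • F x) - (y - a • F y)‖ ≤ (1 + a * L) * ‖x - y‖ := by
  calc ‖(x - a • F x) - (y - a • F y)‖ = ‖(x - y) - a • (F x - F y)‖ := by
        rw [smul_sub]; abel_nf
    _ ≤ ‖x - y‖ + a * ‖F x - F y‖ := by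
        grw [norm_sub_le, norm_smul, Real.norm_of_nonneg ha]
    _ ≤ ‖x - y‖ + a * (L * ‖x - y‖) := by grw [hLip]
    _ = (1 + a * L) * ‖x - y‖ := by ring

end

theorem stmt6_general
    {X : Type*} [NormedAddCommGroup X] [InnerProductSpace ℝ X]
    (F : X → X) (L c : ℝ) (hL : 0 < L) (hc : 0 < c)
    (hLip : ∀ x y : X, ‖F x - F y‖ ≤ L * ‖x - y‖)
    (hmono : ∀ x y : X, c * ‖x - y‖ ^ 2 ≤ ⟪F x - F y, x - y⟫)
    (B : X → X) (hBdef : ∀ x : X, B x = x - (c / L ^ 2) • F x)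
    (u : X) (hu : F u = 0)
    (ηh : ℝ) (hη : 0 ≤ ηh)
    (uh : ℕ → X)
    (hfine : ∀ n, ∀ v : X, |⟪B (uh n) - uh (n + 1), v⟫| ≤ ηh * ‖v‖) :
    ∀ n : ℕ,
      ‖u - uh (n + 1)‖ ≤
        (L ^ 2 / c ^ 2) * ηh + (L / c) * (1 + L / c) * ‖uh (n + 1) - uh n‖ := by
  intro n
  set w := uh (n + 1)
  set d := ‖w - uh n‖
  have hres : ‖w - B (uh n)‖ ≤ ηh := by
    rw [norm_sub_rev]; exact norm_le_of_forall_abs_inner_le hη (hfine n)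
  have hBLip : ‖B (uh n) - B w‖ ≤ (1 + c / L) * d := by
    have := norm_sub_smul_sub_le (a := c / L ^ 2) (by positivity) hLip (uh n) w
    rwa [← hBdef, ← hBdef, norm_sub_rev (uh n), show c / L ^ 2 * L = c / L by field_simp] at this
  have hresidual : c / L ^ 2 * ‖F w‖ ≤ ηh + (1 + c / L) * d := by
    have hFw : (c / L ^ 2) • F w = (w - B (uh n)) + (B (uh n) - B w) := by
      rw [hBdef w]; abel
    rw [← Real.norm_of_nonneg (by positivity : 0 ≤ c / L ^ 2), ← norm_smul, hFw]
    grw [norm_add_le, hres, hBLip]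
  have herr : c * ‖u - w‖ ≤ ‖F w‖ := by
    simpa [hu] using mul_norm_sub_le_norm_sub_of_strongly_monotone hmono u w
  calc ‖u - w‖ ≤ ‖F w‖ / c := (le_div_iff₀' hc).mpr herr
    _ = L ^ 2 / c ^ 2 * (c / L ^ 2 * ‖F w‖) := by field_simp
    _ ≤ L ^ 2 / c ^ 2 * (ηh + (1 + c / L) * d) := by gcongr
    _ = _ := by field_simp; ring

/-- A posteriori error bound: if `F` is `L`-Lipschitz and `c`-strongly monotone,
`B x = x - (c/L²) • F x`, `u` is the unique zero of `F` and `(u_h^n)` satisfies the fineness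
assumption with constant `η_h`, then
`‖u - u_h^{n+1}‖ ≤ (L²/c²) η_h + (L/c)(1 + L/c) ‖u_h^{n+1} - u_h^n‖` for all `n`. -/
theorem stmt6
    {X : Type*} [NormedAddCommGroup X] [InnerProductSpace ℝ X] [CompleteSpace X]
    (F : X → X) (L c : ℝ) (hL : 0 < L) (hc : 0 < c)
    (hLip : ∀ x y : X, ‖F x - F y‖ ≤ L * ‖x - y‖)
    (hmono : ∀ x y : X, c * ‖x - y‖ ^ 2 ≤ ⟪F x - F y, x - y⟫)
    (B : X → X) (hBdef : ∀ x : X, B x = x - (c / L ^ 2) • F x)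
    (u : X) (hu : F u = 0)
    (ηh : ℝ) (hη : 0 ≤ ηh)
    (uh : ℕ → X)
    (hfine : ∀ n, ∀ v : X, |⟪B (uh n) - uh (n + 1), v⟫| ≤ ηh * ‖v‖) :
    ∀ n : ℕ,
      ‖u - uh (n + 1)‖ ≤
        (L ^ 2 / c ^ 2) * ηh + (L / c) * (1 + L / c) * ‖uh (n + 1) - uh n‖ :=
  stmt6_general F L c hL hc hLip hmono B hBdef u hu ηh hη uh hfine
end
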